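/- As z → ∞ with Im z > 0, D(z) converges to the constant D_∞ = ∏_{j=0}^{p−2} ( (√(b−x_j) − √(a−x_j)) / (√(b−x_j) + √(a−x_j)) )^{β_j} · ∏_{j=p+1}^{m} ( (√(x_j−a) − √(x_j−b)) / (√(x_j−a) + √(x_j−b)) )^{β_j}. -/

import Mathlib

/-- The principal complex square root. -/
noncomputable def csqrt (w : ℂ) : ℂ := w ^ ((1 : ℂ) / 2)

/-- `β_j = (1/(2πi)) log(s_j/s_{j+1})`. -/
noncomputable def betaCoef (s : ℕ → ℝ) (j : ℕ) : ℂ :=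
  1 / (2 * ↑Real.pi * Complex.I) * ↑(Real.log (s j / s (j + 1)))

/-- `R_j(z)` for `0 ≤ j ≤ p−2` (so `x_j < a < b`). -/
noncomputable def Rlow (a b xj : ℝ) (z : ℂ) : ℂ :=
  (csqrt (z - ↑a) * ↑(Real.sqrt (b - xj)) - csqrt (z - ↑b) * ↑(Real.sqrt (a - xj))) /
  (csqrt (z - ↑a) * ↑(Real.sqrt (b - xj)) + csqrt (z - ↑b) * ↑(Real.sqrt (a - xj)))

/-- `R_j(z)` for `p+1 ≤ j ≤ m` (so `a < b < x_j`). -/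
noncomputable def Rhigh (a b xj : ℝ) (z : ℂ) : ℂ :=
  (csqrt (z - ↑b) * ↑(Real.sqrt (xj - a)) - csqrt (z - ↑a) * ↑(Real.sqrt (xj - b))) /
  (csqrt (z - ↑b) * ↑(Real.sqrt (xj - a)) + csqrt (z - ↑a) * ↑(Real.sqrt (xj - b)))

/-- The Szegő-type function `D` of the `s_p = 0` analysis:
`D(z) = ∏_{j=0}^{p−2} R_j(z)^{β_j} · ∏_{j=p+1}^m R_j(z)^{β_j}` for `Im z > 0`,
and the same product with exponents `−β_j` for `Im z < 0`. -/
noncomputable def szegoDGap (m p : ℕ) (x s : ℕ → ℝ) (z : ℂ) : ℂ :=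
  if 0 < z.im then
    (∏ j ∈ Finset.range (p - 1), Rlow (x (p - 1)) (x p) (x j) z ^ betaCoef s j) *
      (∏ j ∈ Finset.Icc (p + 1) m, Rhigh (x (p - 1)) (x p) (x j) z ^ betaCoef s j)
  else
    (∏ j ∈ Finset.range (p - 1), Rlow (x (p - 1)) (x p) (x j) z ^ (-betaCoef s j)) *
      (∏ j ∈ Finset.Icc (p + 1) m, Rhigh (x (p - 1)) (x p) (x j) z ^ (-betaCoef s j))

open Filter Topology

namespace SzegoAux

lemma arg_pos_of_im_pos {w : ℂ} (h : 0 < w.im) : 0 < w.arg := by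
  rcases lt_or_eq_of_le (Complex.arg_nonneg_iff.mpr h.le) with h' | h'
  · exact h'
  · exact absurd (Complex.arg_eq_zero_iff.mp h'.symm).2 (ne_of_gt h)

lemma log_div_im_pos {w₁ w₂ : ℂ} (h1 : 0 < w₁.im) (h2 : 0 < w₂.im) :
    Complex.log (w₁ / w₂) = Complex.log w₁ - Complex.log w₂ := by
  have h1' : w₁ ≠ 0 := fun h => by simp [h] at h1
  have h2' : w₂ ≠ 0 := fun h => by simp [h] at h2
  have hc2 : (starRingEnd ℂ) w₂ ≠ 0 := by simpa using h2'
  have harg2 : w₂.arg ≠ Real.pi := by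
    intro h
    have := (Complex.arg_eq_pi_iff.mp h).2
    rw [this] at h2; exact lt_irrefl _ h2
  have hns : (Complex.normSq w₂ : ℂ) ≠ 0 := by
    exact_mod_cast (Complex.normSq_pos.mpr h2').ne'
  have key : w₁ / w₂ = (w₁ * (starRingEnd ℂ) w₂) * (((Complex.normSq w₂)⁻¹ : ℝ) : ℂ) := by
    rw [div_eq_mul_inv, Complex.inv_def]
    push_cast; ring
  have hnspos : (0:ℝ) < (Complex.normSq w₂)⁻¹ :=
    inv_pos.mpr (Complex.normSq_pos.mpr h2')
  rw [key, Complex.log_mul_ofReal _ hnspos _ (mul_ne_zero h1' hc2)]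
  have hargc : ((starRingEnd ℂ) w₂).arg = -w₂.arg := by
    rw [Complex.arg_conj, if_neg harg2]
  have h1pos : 0 < w₁.arg := arg_pos_of_im_pos h1
  have h2pos : 0 < w₂.arg := arg_pos_of_im_pos h2
  have h2lt : w₂.arg < Real.pi := Complex.arg_lt_pi_iff.mpr (Or.inr (ne_of_gt h2))
  have h1le : w₁.arg ≤ Real.pi := Complex.arg_le_pi w₁
  have hlm : Complex.log (w₁ * (starRingEnd ℂ) w₂)
      = Complex.log w₁ + Complex.log ((starRingEnd ℂ) w₂) := by
    apply Complex.log_mul h1' hc2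
    rw [hargc]
    constructor <;> linarith
  rw [hlm, Complex.log_conj _ harg2]
  have hcj : Complex.log w₂ + (starRingEnd ℂ) (Complex.log w₂)
      = ((2 * (Complex.log w₂).re : ℝ) : ℂ) := Complex.add_conj _
  have hre : (Complex.log w₂).re = Real.log ‖w₂‖ := Complex.log_re _
  have hlog : Real.log ((Complex.normSq w₂)⁻¹) = -(2 * Real.log ‖w₂‖) := by
    rw [Real.log_inv, ← Complex.sq_norm, Real.log_pow]
    push_cast; ring
  rw [hlog]
  rw [hre] at hcj
  push_cast at hcj ⊢
  linear_combination hcj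

lemma tendsto_csqrt_ratio (a b : ℝ) :
    Tendsto (fun z : ℂ => csqrt (z - b) / csqrt (z - a))
      (comap (fun z : ℂ => ‖z‖) atTop ⊓ 𝓟 {z : ℂ | 0 < z.im}) (𝓝 1) := by
  set L := comap (fun z : ℂ => ‖z‖) atTop ⊓ 𝓟 {z : ℂ | 0 < z.im} with hL
  have ev_im : ∀ᶠ z : ℂ in L, 0 < z.im :=
    mem_inf_of_right (mem_principal_self _)
  have habs : ∀ c : ℝ, Tendsto (fun z : ℂ => ‖z - c‖) L atTop := by
    intro c
    apply Tendsto.mono_left ?_ (inf_le_left (b := 𝓟 {z : ℂ | 0 < z.im}))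
    apply tendsto_atTop_mono (f := fun z : ℂ => ‖z‖ - ‖(c : ℂ)‖)
    · intro z
      simpa using norm_sub_norm_le z (c : ℂ)
    · exact tendsto_atTop_add_const_right _ _ tendsto_comap
  have hdiv : Tendsto (fun z : ℂ => (z - b) / (z - a)) L (𝓝 1) := by
    have h0 : Tendsto (fun z : ℂ => ((a : ℂ) - b) / (z - a)) L (𝓝 0) := by
      rw [tendsto_zero_iff_norm_tendsto_zero]
      have : Tendsto (fun z : ℂ => ‖(a:ℂ) - b‖ / ‖z - a‖) L (𝓝 0) :=
        Filter.Tendsto.div_atTop tendsto_const_nhds (habs a)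
      simpa [norm_div] using this
    have h1 := (tendsto_const_nhds (x := (1:ℂ)) (f := L)).add h0
    rw [add_zero] at h1
    apply h1.congr'
    filter_upwards [ev_im] with z hz
    have ha : z - (a:ℂ) ≠ 0 := by
      intro h
      have : z.im = 0 := by
        have := congrArg Complex.im h; simpa using this
      linarith
    field_simp
    ring
  have hc : ContinuousAt (fun w : ℂ => w ^ ((1:ℂ)/2)) 1 :=
    continuousAt_cpow_const (by simp [Complex.slitPlane])
  have h1 : Tendsto (fun z : ℂ => csqrt ((z - b) / (z - a))) L (𝓝 1) := by
    have := hc.tendsto.comp hdiv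
    simpa [csqrt, Complex.one_cpow, Function.comp_def] using this
  apply h1.congr'
  filter_upwards [ev_im] with z hz
  have hima : 0 < (z - (a:ℂ)).im := by simpa using hz
  have himb : 0 < (z - (b:ℂ)).im := by simpa using hz
  have ha : z - (a:ℂ) ≠ 0 := fun h => by simp [h] at hima
  have hb : z - (b:ℂ) ≠ 0 := fun h => by simp [h] at himb
  simp only [csqrt]
  rw [Complex.cpow_def_of_ne_zero (div_ne_zero hb ha),
    Complex.cpow_def_of_ne_zero hb, Complex.cpow_def_of_ne_zero ha,
    log_div_im_pos himb hima, sub_mul, Complex.exp_sub]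

lemma tendsto_Rgen (a b c1 c2 : ℝ) (hc2 : 0 < c2) (hc12 : c2 < c1) :
    Tendsto (fun z : ℂ => (csqrt (z - a) * c1 - csqrt (z - b) * c2) /
        (csqrt (z - a) * c1 + csqrt (z - b) * c2))
      (comap (fun z : ℂ => ‖z‖) atTop ⊓ 𝓟 {z : ℂ | 0 < z.im})
      (𝓝 (((c1 - c2) / (c1 + c2) : ℝ) : ℂ)) := by
  set L := comap (fun z : ℂ => ‖z‖) atTop ⊓ 𝓟 {z : ℂ | 0 < z.im} with hL
  have ev_im : ∀ᶠ z : ℂ in L, 0 < z.im :=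
    mem_inf_of_right (mem_principal_self _)
  have ht := tendsto_csqrt_ratio a b
  have hden : ((c1:ℂ) + 1 * (c2:ℂ)) ≠ 0 := by
    rw [one_mul, ← Complex.ofReal_add]
    exact_mod_cast (by linarith : (0:ℝ) < c1 + c2).ne'
  have h2 : Tendsto (fun z : ℂ => ((c1:ℂ) - csqrt (z - b) / csqrt (z - a) * c2) /
      ((c1:ℂ) + csqrt (z - b) / csqrt (z - a) * c2)) L
      (𝓝 (((c1:ℂ) - 1 * c2) / ((c1:ℂ) + 1 * c2))) :=
    Tendsto.div (tendsto_const_nhds.sub (ht.mul tendsto_const_nhds))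
      (tendsto_const_nhds.add (ht.mul tendsto_const_nhds)) hden
  have hlim : ((c1:ℂ) - 1 * c2) / ((c1:ℂ) + 1 * c2) = (((c1 - c2) / (c1 + c2) : ℝ) : ℂ) := by
    push_cast; ring
  rw [hlim] at h2
  apply h2.congr'
  filter_upwards [ev_im] with z hz
  have hima : 0 < (z - (a:ℂ)).im := by simpa using hz
  have ha : z - (a:ℂ) ≠ 0 := fun h => by simp [h] at hima
  have hA : csqrt (z - a) ≠ 0 := by
    rw [csqrt, Complex.cpow_def_of_ne_zero ha]; exact Complex.exp_ne_zero _
  have e1 : (c1:ℂ) - csqrt (z - b) / csqrt (z - a) * c2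
      = (csqrt (z - a) * c1 - csqrt (z - b) * c2) / csqrt (z - a) := by
    field_simp
  have e2 : (c1:ℂ) + csqrt (z - b) / csqrt (z - a) * c2
      = (csqrt (z - a) * c1 + csqrt (z - b) * c2) / csqrt (z - a) := by
    field_simp
  rw [e1, e2, div_div_div_cancel_right₀ hA]

end SzegoAux

theorem szegoDGap_tendsto_Dinfty
    (m p : ℕ) (hm : 1 ≤ m) (hp : 1 ≤ p) (hpm : p ≤ m) (x s : ℕ → ℝ)
    (hx : ∀ j, j < m → x j < x (j + 1))
    (hs : ∀ j, 1 ≤ j → j ≤ m → j ≠ p → 0 < s j)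
    (hs0 : s 0 = 1) (hsm : s (m + 1) = 1) :
    Filter.Tendsto (szegoDGap m p x s)
      (Filter.comap (fun z : ℂ => ‖z‖) Filter.atTop ⊓ Filter.principal {z : ℂ | 0 < z.im})
      (nhds
        ((∏ j ∈ Finset.range (p - 1),
            ((↑((Real.sqrt (x p - x j) - Real.sqrt (x (p - 1) - x j)) /
                (Real.sqrt (x p - x j) + Real.sqrt (x (p - 1) - x j))) : ℂ)) ^ betaCoef s j) *
          (∏ j ∈ Finset.Icc (p + 1) m,
            ((↑((Real.sqrt (x j - x (p - 1)) - Real.sqrt (x j - x p)) /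
                (Real.sqrt (x j - x (p - 1)) + Real.sqrt (x j - x p))) : ℂ)) ^ betaCoef s j))) := by
  set L := Filter.comap (fun z : ℂ => ‖z‖) Filter.atTop ⊓ Filter.principal {z : ℂ | 0 < z.im} with hL
  have ev_im : ∀ᶠ z : ℂ in L, 0 < z.im :=
    mem_inf_of_right (mem_principal_self _)
  have hlt : ∀ i k : ℕ, i < k → k ≤ m → x i < x k := by
    intro i k hik hkm
    induction k with
    | zero => omega
    | succ n ih =>
      rcases Nat.lt_or_ge i n with h | h
      · exact (ih (by omega) (by omega)).trans (hx n (by omega))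
      · have : i = n := by omega
        subst this; exact hx i (by omega)
  -- slit plane membership for positive real quotients
  have hmem : ∀ c1 c2 : ℝ, 0 < c2 → c2 < c1 →
      (((c1 - c2) / (c1 + c2) : ℝ) : ℂ) ∈ Complex.slitPlane := by
    intro c1 c2 h2 h12
    apply Complex.mem_slitPlane_iff.mpr
    left
    rw [Complex.ofReal_re]
    have : 0 < c1 + c2 := by linarith
    exact div_pos (by linarith) this
  have hlow : Filter.Tendsto
      (fun z => ∏ j ∈ Finset.range (p - 1), Rlow (x (p - 1)) (x p) (x j) z ^ betaCoef s j) L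
      (𝓝 (∏ j ∈ Finset.range (p - 1),
        ((↑((Real.sqrt (x p - x j) - Real.sqrt (x (p - 1) - x j)) /
            (Real.sqrt (x p - x j) + Real.sqrt (x (p - 1) - x j))) : ℂ)) ^ betaCoef s j)) := by
    apply tendsto_finset_prod
    intro j hj
    rw [Finset.mem_range] at hj
    have hj1 : x j < x (p - 1) := hlt j (p - 1) hj (by omega)
    have hj2 : x (p - 1) < x p := by
      have := hx (p - 1) (by omega)
      have e : p - 1 + 1 = p := by omega
      rwa [e] at this
    set c2 := Real.sqrt (x (p - 1) - x j) with hc2def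
    set c1 := Real.sqrt (x p - x j) with hc1def
    have hc2 : 0 < c2 := Real.sqrt_pos.mpr (by linarith)
    have hc12 : c2 < c1 := Real.sqrt_lt_sqrt (by linarith) (by linarith)
    have hR : Filter.Tendsto (fun z => Rlow (x (p - 1)) (x p) (x j) z) L
        (𝓝 (((c1 - c2) / (c1 + c2) : ℝ) : ℂ)) := by
      have := SzegoAux.tendsto_Rgen (x (p - 1)) (x p) c1 c2 hc2 hc12
      exact this
    exact (continuousAt_cpow_const (hmem c1 c2 hc2 hc12)).tendsto.comp hR
  have hhigh : Filter.Tendsto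
      (fun z => ∏ j ∈ Finset.Icc (p + 1) m, Rhigh (x (p - 1)) (x p) (x j) z ^ betaCoef s j) L
      (𝓝 (∏ j ∈ Finset.Icc (p + 1) m,
        ((↑((Real.sqrt (x j - x (p - 1)) - Real.sqrt (x j - x p)) /
            (Real.sqrt (x j - x (p - 1)) + Real.sqrt (x j - x p))) : ℂ)) ^ betaCoef s j)) := by
    apply tendsto_finset_prod
    intro j hj
    rw [Finset.mem_Icc] at hj
    have hj1 : x p < x j := hlt p j (by omega) (by omega)
    have hj2 : x (p - 1) < x p := by
      have := hx (p - 1) (by omega)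
      have e : p - 1 + 1 = p := by omega
      rwa [e] at this
    set c2 := Real.sqrt (x j - x p) with hc2def
    set c1 := Real.sqrt (x j - x (p - 1)) with hc1def
    have hc2 : 0 < c2 := Real.sqrt_pos.mpr (by linarith)
    have hc12 : c2 < c1 := Real.sqrt_lt_sqrt (by linarith) (by linarith)
    have hR : Filter.Tendsto (fun z => Rhigh (x (p - 1)) (x p) (x j) z) L
        (𝓝 (((c1 - c2) / (c1 + c2) : ℝ) : ℂ)) := by
      have := SzegoAux.tendsto_Rgen (x p) (x (p - 1)) c1 c2 hc2 hc12
      exact this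
    exact (continuousAt_cpow_const (hmem c1 c2 hc2 hc12)).tendsto.comp hR
  apply (hlow.mul hhigh).congr'
  filter_upwards [ev_im] with z hz
  simp only [szegoDGap, if_pos hz]
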